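/- arXiv:2001.10266 — 2 statements merged into one kernel-verified Lean document; each statement's English description precedes it below -/
import Mathlib

section
/- Let (X, 𝓔) be a uniformly locally finite coarse space. Then 𝓔 equals the union over all operators a in the uniform Roe algebra C*_u(X,𝓔) and all ε > 0 of the sets {(x,y) ∈ X×X : ‖e_{yy} a e_{xx}‖ > ε}. -/
open ContinuousLinearMap

/-- A coarse structure on `X`: a collection of subsets of `X × X` containing the diagonal
and closed under subsets, finite unions, inverses, and composition. -/
structure CoarseStructure (X : Type*) where
  sets : Set (Set (X × X))
  diagonal_mem : {p : X × X | p.1 = p.2} ∈ sets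
  subset_mem : ∀ E ∈ sets, ∀ F ⊆ E, F ∈ sets
  union_mem : ∀ E ∈ sets, ∀ F ∈ sets, E ∪ F ∈ sets
  inv_mem : ∀ E ∈ sets, {p : X × X | (p.2, p.1) ∈ E} ∈ sets
  comp_mem : ∀ E ∈ sets, ∀ F ∈ sets,
    {p : X × X | ∃ y, (p.1, y) ∈ E ∧ (y, p.2) ∈ F} ∈ sets

/-- A coarse structure is uniformly locally finite if each entourage has uniformly
finite sections. -/
def CoarseStructure.ULF {X : Type*} (𝓔 : CoarseStructure X) : Prop :=
  ∀ E ∈ 𝓔.sets, ∃ k : ℕ, ∀ x : X,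
    Set.Finite {y | (x, y) ∈ E} ∧ Nat.card {y | (x, y) ∈ E} ≤ k

noncomputable section

/-- The standard basis vector `δ_x` of `ℓ²(X)`. -/
def deltaVec (X : Type*) [DecidableEq X] (x : X) : lp (fun _ : X => ℂ) 2 :=
  lp.single 2 x 1

/-- The rank-one orthogonal projection `e_{xx}` onto `ℂ δ_x` in `ℓ²(X)`. -/
def ee (X : Type*) [DecidableEq X] (x : X) :
    lp (fun _ : X => ℂ) 2 →L[ℂ] lp (fun _ : X => ℂ) 2 :=
  (innerSL ℂ (deltaVec X x)).smulRight (deltaVec X x)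

/-- The support of an operator `a` on `ℓ²(X)`:
`{(x, y) : ⟨a δ_x, δ_y⟩ ≠ 0}`. -/
def opSupport {X : Type*} [DecidableEq X]
    (a : lp (fun _ : X => ℂ) 2 →L[ℂ] lp (fun _ : X => ℂ) 2) : Set (X × X) :=
  {p | inner (𝕜 := ℂ) (a (deltaVec X p.1)) (deltaVec X p.2) ≠ 0}

/-- The uniform Roe algebra of `(X, 𝓔)`: the operator-norm closure of the set of
operators with `𝓔`-bounded propagation. -/
def RoeAlgebra {X : Type*} [DecidableEq X] (𝓔 : CoarseStructure X) :
    Set (lp (fun _ : X => ℂ) 2 →L[ℂ] lp (fun _ : X => ℂ) 2) :=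
  closure {a | opSupport a ∈ 𝓔.sets}

end

/-!
If `E ∈ 𝓔`, uniform local finiteness bounds the number of points in each row of `E` and, applied
to the inverse entourage, in each column; by the Schur test the 0/1 matrix of `E` is then a
bounded operator, whose support is exactly `E` and whose coefficients on `E` all equal `1`.
Conversely, if `a ∈ C*_u(X, 𝓔)` has coefficients of modulus `> ε` on `E`, choose `b` of
`𝓔`-bounded propagation with `‖a - b‖ < ε`: since a matrix coefficient is bounded by the operator
norm, `b` has no zero coefficient on `E`, so `E ⊆ supp b ∈ 𝓔`.
-/

open scoped ENNReal ComplexConjugate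

namespace Finset

variable {X : Type*} {k : ℕ}

theorem norm_sum_sq_le_card_mul {E : Type*} [SeminormedAddCommGroup E] (t : Finset X)
    (f : X → E) : ‖∑ x ∈ t, f x‖ ^ 2 ≤ #t * ∑ x ∈ t, ‖f x‖ ^ 2 := by
  calc ‖∑ x ∈ t, f x‖ ^ 2 ≤ (∑ x ∈ t, ‖f x‖) ^ 2 := by gcongr; exact norm_sum_le _ _
    _ ≤ #t * ∑ x ∈ t, ‖f x‖ ^ 2 := sq_sum_le_card_mul_sum_sq

theorem sum_sum_le_mul_sum_biUnion [DecidableEq X] (s : X → Finset X)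
    (hrow : ∀ x (F : Finset X), #{y ∈ F | x ∈ s y} ≤ k) {g : X → ℝ} (hg : ∀ x, 0 ≤ g x)
    (F : Finset X) : ∑ y ∈ F, ∑ x ∈ s y, g x ≤ k * ∑ x ∈ F.biUnion s, g x := by
  rw [sum_comm' (s' := fun x => {y ∈ F | x ∈ s y}) (t' := F.biUnion s)
    (fun y x => by simp only [mem_filter, mem_biUnion]; grind), mul_sum]
  gcongr with x
  rw [sum_const, nsmul_eq_mul]
  gcongr
  · exact hg x
  · exact_mod_cast hrow x F

end Finset

theorem lp.sum_norm_sq_le_norm_sq {ι : Type*} {E : ι → Type*} [∀ i, NormedAddCommGroup (E i)]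
    (f : lp E 2) (s : Finset ι) : ∑ i ∈ s, ‖f i‖ ^ 2 ≤ ‖f‖ ^ 2 := by
  simpa only [ENNReal.toReal_ofNat, Real.rpow_two] using
    lp.sum_rpow_le_norm_rpow (by norm_num) f s

section ColumnSums

open Finset

variable {X : Type*} [DecidableEq X] (s : X → Finset X) {k k' : ℕ}

theorem sum_norm_sum_sq_le (hcol : ∀ y, #(s y) ≤ k')
    (hrow : ∀ x (F : Finset X), #{y ∈ F | x ∈ s y} ≤ k) (f : lp (fun _ : X => ℂ) 2)
    (F : Finset X) : ∑ y ∈ F, ‖∑ x ∈ s y, f x‖ ^ 2 ≤ k * k' * ‖f‖ ^ 2 :=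
  calc ∑ y ∈ F, ‖∑ x ∈ s y, f x‖ ^ 2 ≤ ∑ y ∈ F, k' * ∑ x ∈ s y, ‖f x‖ ^ 2 := by
        gcongr with y
        exact (norm_sum_sq_le_card_mul _ _).trans (by gcongr; exact_mod_cast hcol y)
    _ ≤ k' * (k * ∑ x ∈ F.biUnion s, ‖f x‖ ^ 2) := by
        rw [← mul_sum]
        gcongr
        exact sum_sum_le_mul_sum_biUnion s hrow (fun x => by positivity) F
    _ ≤ k * k' * ‖f‖ ^ 2 := by
        rw [mul_left_comm, ← mul_assoc]
        gcongr
        exact lp.sum_norm_sq_le_norm_sq f _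

/-- Schur test: a 0/1 matrix with at most `k` ones in each row and `k'` in each column is
bounded on `ℓ²`, of norm at most `√(k k')`. -/
theorem exists_clm_apply_eq_sum (hcol : ∀ y, #(s y) ≤ k')
    (hrow : ∀ x (F : Finset X), #{y ∈ F | x ∈ s y} ≤ k) :
    ∃ T : lp (fun _ : X => ℂ) 2 →L[ℂ] lp (fun _ : X => ℂ) 2,
      ∀ f y, T f y = ∑ x ∈ s y, f x := by
  have hsq (f : lp (fun _ : X => ℂ) 2) (F : Finset X) :
      ∑ y ∈ F, ‖∑ x ∈ s y, f x‖ ^ (2 : ℝ≥0∞).toReal ≤ (√(k * k') * ‖f‖) ^ (2 : ℝ≥0∞).toReal := by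
    have hkk' : (0 : ℝ) ≤ k * k' := by positivity
    simp only [ENNReal.toReal_ofNat, Real.rpow_two, mul_pow, Real.sq_sqrt hkk']
    exact sum_norm_sum_sq_le s hcol hrow f F
  let T : lp (fun _ : X => ℂ) 2 →ₗ[ℂ] lp (fun _ : X => ℂ) 2 :=
    { toFun f := ⟨fun y => ∑ x ∈ s y, f x, memℓp_gen' (hsq f)⟩
      map_add' f g := lp.ext <| funext fun y => by
        simp only [lp.coeFn_add, Pi.add_apply, sum_add_distrib]
      map_smul' c f := lp.ext <| funext fun y => by simp [mul_sum] }
  have hT (f) : ‖T f‖ ≤ √(k * k') * ‖f‖ :=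
    lp.norm_le_of_forall_sum_le (by norm_num) (by positivity) (hsq f)
  exact ⟨T.mkContinuous _ hT, fun _ _ => rfl⟩

end ColumnSums

section MatrixCoefficients

variable {X : Type*} [DecidableEq X]

theorem norm_deltaVec (x : X) : ‖deltaVec X x‖ = 1 := by
  rw [deltaVec, lp.norm_single (by norm_num), norm_one]

theorem inner_deltaVec_right (f : lp (fun _ : X => ℂ) 2) (y : X) :
    inner ℂ f (deltaVec X y) = conj (f y) := by
  simp [deltaVec, lp.inner_single_right]

theorem norm_ee_comp_comp_ee (a : lp (fun _ : X => ℂ) 2 →L[ℂ] lp (fun _ : X => ℂ) 2) (x y : X) :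
    ‖ee X y ∘L a ∘L ee X x‖ = ‖inner ℂ (a (deltaVec X x)) (deltaVec X y)‖ := by
  have h : ee X y ∘L a ∘L ee X x = (innerSL ℂ (deltaVec X x)).smulRight
      (inner ℂ (deltaVec X y) (a (deltaVec X x)) • deltaVec X y) := by
    ext f
    simp [ee, smul_smul, mul_comm]
  rw [h, norm_smulRight_apply, innerSL_apply_norm, norm_smul, norm_deltaVec, norm_deltaVec,
    ← inner_conj_symm, RCLike.norm_conj, one_mul, mul_one]

theorem norm_inner_apply_deltaVec_le (a : lp (fun _ : X => ℂ) 2 →L[ℂ] lp (fun _ : X => ℂ) 2)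
    (x y : X) : ‖inner ℂ (a (deltaVec X x)) (deltaVec X y)‖ ≤ ‖a‖ :=
  calc ‖inner ℂ (a (deltaVec X x)) (deltaVec X y)‖
      ≤ ‖a (deltaVec X x)‖ * ‖deltaVec X y‖ := norm_inner_le_norm _ _
    _ ≤ ‖a‖ := by simpa [norm_deltaVec] using a.le_opNorm (deltaVec X x)

theorem mem_opSupport_of_norm_sub_lt {a b : lp (fun _ : X => ℂ) 2 →L[ℂ] lp (fun _ : X => ℂ) 2}
    {x y : X} (h : ‖a - b‖ < ‖inner ℂ (a (deltaVec X x)) (deltaVec X y)‖) :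
    (x, y) ∈ opSupport b := by
  intro hb
  have := norm_inner_apply_deltaVec_le (a - b) x y
  rw [sub_apply, inner_sub_left, hb, sub_zero] at this
  exact this.not_gt h

end MatrixCoefficients

theorem exists_inner_deltaVec_eq_indicator {X : Type*} [DecidableEq X] {E : Set (X × X)}
    {k k' : ℕ} (hrow : ∀ x, {y | (x, y) ∈ E}.Finite ∧ Nat.card {y | (x, y) ∈ E} ≤ k)
    (hcol : ∀ y, {x | (x, y) ∈ E}.Finite ∧ Nat.card {x | (x, y) ∈ E} ≤ k') :
    ∃ a : lp (fun _ : X => ℂ) 2 →L[ℂ] lp (fun _ : X => ℂ) 2,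
      ∀ p : X × X, inner ℂ (a (deltaVec X p.1)) (deltaVec X p.2) = E.indicator 1 p := by
  let s y := (hcol y).1.toFinset
  have hs (x y : X) : x ∈ s y ↔ (x, y) ∈ E := Set.Finite.mem_toFinset _
  have hcard_s (y : X) : (s y).card ≤ k' := Nat.card_eq_card_finite_toFinset _ ▸ (hcol y).2
  have hcard_row (x : X) (F : Finset X) : {y ∈ F | x ∈ s y}.card ≤ k :=
    calc {y ∈ F | x ∈ s y}.card ≤ (hrow x).1.toFinset.card :=
          Finset.card_le_card fun y hy => by simpa [hs] using (Finset.mem_filter.1 hy).2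
      _ ≤ k := Nat.card_eq_card_finite_toFinset _ ▸ (hrow x).2
  obtain ⟨T, hT⟩ := exists_clm_apply_eq_sum s hcard_s hcard_row
  refine ⟨T, fun ⟨x, y⟩ => ?_⟩
  rw [inner_deltaVec_right, hT]
  by_cases h : (x, y) ∈ E
  · simp [deltaVec, (hs x y).2 h, h]
  · simp [deltaVec, mt (hs x y).1 h, h]

/-- For a u.l.f. coarse space `(X, 𝓔)`, an entourage is precisely a set on which some
operator of the uniform Roe algebra has all matrix coefficients of norm `> ε`:
`𝓔 = ⋃_{a ∈ C*_u(X,𝓔), ε > 0} {(x,y) : ‖e_yy a e_xx‖ > ε}` (as a collection of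
entourages, `𝓔` consists exactly of the subsets of such sets). -/
theorem entourage_iff_roe_matrix_coefficients {X : Type*} [DecidableEq X]
    (𝓔 : CoarseStructure X) (hulf : 𝓔.ULF) (E : Set (X × X)) :
    E ∈ 𝓔.sets ↔ ∃ a ∈ RoeAlgebra 𝓔, ∃ ε > (0 : ℝ),
      E ⊆ {p : X × X | ε < ‖ee X p.2 ∘L a ∘L ee X p.1‖} := by
  constructor
  · intro hE
    obtain ⟨k, hrow⟩ := hulf E hE
    obtain ⟨k', hcol⟩ := hulf _ (𝓔.inv_mem E hE)
    obtain ⟨a, ha⟩ := exists_inner_deltaVec_eq_indicator hrow hcol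
    have hsupp : opSupport a = E := by
      ext p
      simp [opSupport, ha]
    refine ⟨a, subset_closure (show opSupport a ∈ 𝓔.sets from hsupp ▸ hE), 1 / 2, by norm_num,
      fun p hp => ?_⟩
    norm_num [norm_ee_comp_comp_ee, ha, hp]
  · rintro ⟨a, ha, ε, hε, hE⟩
    obtain ⟨b, hb, hab⟩ := Metric.mem_closure_iff.1 ha ε hε
    refine 𝓔.subset_mem _ hb E fun p hp => mem_opSupport_of_norm_sub_lt (a := a) ?_
    rw [← dist_eq_norm, ← norm_ee_comp_comp_ee]
    exact hab.trans (hE hp)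
end

section
/- Let (X,𝓔) and (Y,𝓔') be uniformly locally finite coarse spaces and let λ be an infinite cardinal. If X coarsely embeds into Y and 𝓔' is generated by a set of size λ, then 𝓔 is generated by a set of size at most λ. -/
/-!
Close the generating family `F` of `𝓔'` off under symmetrization and finite composition:
every entourage of `𝓔'` lies in one of the resulting relations, and there are at most
`max ℵ₀ #F` of them because each is indexed by a finite word in `F`. Pulling this cofinal
family back along the coarse embedding gives a family in `𝓔` that is again cofinal, since
the image of an entourage of `X` is an entourage of `Y`.
-/

open ContinuousLinearMap

universe u

open SetRel Cardinal

namespace SetRel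

variable {X : Type*}

def symmRefl (e : SetRel X X) : SetRel X X := e ∪ e.inv ∪ SetRel.id

lemma inv_symmRefl (e : SetRel X X) : e.symmRefl.inv = e.symmRefl := by
  ext ⟨a, b⟩
  simp only [symmRefl, mem_inv, Set.mem_union, mem_id]
  tauto

-- Reflexive letters let composition absorb unions; symmetric ones make inversion word reversal.
def wordComp : List (SetRel X X) → SetRel X X
  | [] => SetRel.id
  | e :: l => e.symmRefl ○ wordComp l

@[simp] lemma wordComp_nil : wordComp ([] : List (SetRel X X)) = SetRel.id := rfl

@[simp] lemma wordComp_cons (e : SetRel X X) (l : List (SetRel X X)) :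
    wordComp (e :: l) = e.symmRefl ○ wordComp l := rfl

lemma wordComp_singleton (e : SetRel X X) : wordComp [e] = e.symmRefl := by simp

lemma subset_wordComp_singleton (e : SetRel X X) : e ⊆ wordComp [e] := by
  rw [wordComp_singleton]
  exact Set.subset_union_left.trans Set.subset_union_left

lemma id_subset_wordComp : ∀ l : List (SetRel X X), SetRel.id ⊆ wordComp l
  | [] => subset_rfl
  | e :: l => by
    rintro ⟨a, b⟩ (rfl : a = b)
    exact ⟨a, Or.inr rfl, id_subset_wordComp l rfl⟩

lemma wordComp_append : ∀ l₁ l₂ : List (SetRel X X),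
    wordComp (l₁ ++ l₂) = wordComp l₁ ○ wordComp l₂
  | [], l₂ => by simp
  | e :: l₁, l₂ => by simp [wordComp_append l₁ l₂, comp_assoc]

lemma inv_wordComp : ∀ l : List (SetRel X X), (wordComp l).inv = wordComp l.reverse
  | [] => inv_id
  | e :: l => by
    simp [inv_wordComp l, wordComp_append, inv_symmRefl]

lemma union_subset_wordComp_append (l₁ l₂ : List (SetRel X X)) :
    wordComp l₁ ∪ wordComp l₂ ⊆ wordComp (l₁ ++ l₂) := by
  rw [wordComp_append]
  rintro ⟨a, b⟩ (h | h)
  · exact ⟨b, h, id_subset_wordComp l₂ rfl⟩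
  · exact ⟨a, id_subset_wordComp l₁ rfl, h⟩

end SetRel

namespace CoarseStructure

variable {X : Type*}

def IsGeneratedBy (𝓔 : CoarseStructure X) (G : Set (SetRel X X)) : Prop :=
  G ⊆ 𝓔.sets ∧ ∀ 𝓖 : CoarseStructure X, G ⊆ 𝓖.sets → 𝓔.sets ⊆ 𝓖.sets

lemma wordComp_mem (𝓔 : CoarseStructure X) :
    ∀ {l : List (SetRel X X)}, (∀ e ∈ l, e ∈ 𝓔.sets) → wordComp l ∈ 𝓔.sets
  | [], _ => 𝓔.diagonal_mem
  | e :: l, hl => by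
    have he := hl e List.mem_cons_self
    exact 𝓔.comp_mem _ (𝓔.union_mem _ (𝓔.union_mem _ he _ (𝓔.inv_mem _ he)) _ 𝓔.diagonal_mem)
      _ (wordComp_mem 𝓔 fun e' he' ↦ hl e' (List.mem_cons_of_mem e he'))

def generate (F : Set (SetRel X X)) : CoarseStructure X where
  sets := {E | ∃ l : List F, E ⊆ wordComp (l.map Subtype.val)}
  diagonal_mem := ⟨[], subset_rfl⟩
  subset_mem := fun _ ⟨l, hl⟩ _ h ↦ ⟨l, h.trans hl⟩
  union_mem := fun _ ⟨l₁, h₁⟩ _ ⟨l₂, h₂⟩ ↦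
    ⟨l₁ ++ l₂, by
      rw [List.map_append]
      exact (Set.union_subset_union h₁ h₂).trans (union_subset_wordComp_append _ _)⟩
  inv_mem := fun _ ⟨l, hl⟩ ↦
    ⟨l.reverse, by
      rw [List.map_reverse, ← inv_wordComp]
      exact inv_mono hl⟩
  comp_mem := fun _ ⟨l₁, h₁⟩ _ ⟨l₂, h₂⟩ ↦
    ⟨l₁ ++ l₂, by
      rw [List.map_append, wordComp_append]
      exact comp_subset_comp h₁ h₂⟩

lemma subset_generate (F : Set (SetRel X X)) : F ⊆ (generate F).sets :=
  fun e he ↦ ⟨[⟨e, he⟩], subset_wordComp_singleton e⟩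

lemma IsGeneratedBy.exists_subset_wordComp {𝓔 : CoarseStructure X} {F : Set (SetRel X X)}
    (hF : 𝓔.IsGeneratedBy F) {E : SetRel X X} (hE : E ∈ 𝓔.sets) :
    ∃ l : List F, E ⊆ wordComp (l.map Subtype.val) :=
  hF.2 (generate F) (subset_generate F) hE

lemma IsGeneratedBy.wordComp_mem {𝓔 : CoarseStructure X} {F : Set (SetRel X X)}
    (hF : 𝓔.IsGeneratedBy F) (l : List F) : wordComp (l.map Subtype.val) ∈ 𝓔.sets :=
  𝓔.wordComp_mem fun e he ↦ by
    obtain ⟨e, -, rfl⟩ := List.mem_map.1 he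
    exact hF.1 e.2

lemma IsGeneratedBy.of_cofinal {𝓔 : CoarseStructure X} {G : Set (SetRel X X)}
    (hG : G ⊆ 𝓔.sets) (hcofinal : ∀ E ∈ 𝓔.sets, ∃ D ∈ G, E ⊆ D) : 𝓔.IsGeneratedBy G :=
  ⟨hG, fun 𝓖 hG𝓖 E hE ↦
    let ⟨D, hD, hED⟩ := hcofinal E hE
    𝓖.subset_mem D (hG𝓖 hD) E hED⟩

end CoarseStructure

open CoarseStructure in
theorem generated_le_of_coarse_embedding_general {X Y : Type u}
    (𝓔 : CoarseStructure X) (𝓔' : CoarseStructure Y)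
    (lam : Cardinal) (hlam : Cardinal.aleph0 ≤ lam)
    (f : X → Y)
    (hcoarse : ∀ E ∈ 𝓔.sets,
      {p : Y × Y | ∃ q ∈ E, p = (f q.1, f q.2)} ∈ 𝓔'.sets)
    (hexpanding : ∀ E ∈ 𝓔'.sets, {q : X × X | (f q.1, f q.2) ∈ E} ∈ 𝓔.sets)
    (hgen : ∃ F : Set (Set (Y × Y)), Cardinal.mk F = lam ∧ F ⊆ 𝓔'.sets ∧
      ∀ 𝓖 : CoarseStructure Y, F ⊆ 𝓖.sets → 𝓔'.sets ⊆ 𝓖.sets) :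
    ∃ G : Set (Set (X × X)), Cardinal.mk G ≤ lam ∧ G ⊆ 𝓔.sets ∧
      ∀ 𝓖 : CoarseStructure X, G ⊆ 𝓖.sets → 𝓔.sets ⊆ 𝓖.sets := by
  obtain ⟨F, rfl, hF⟩ := hgen
  have hF : 𝓔'.IsGeneratedBy F := hF
  refine ⟨Set.range fun l : List F ↦ Prod.map f f ⁻¹' wordComp (l.map Subtype.val), ?_,
    IsGeneratedBy.of_cofinal ?_ ?_⟩
  · calc #(Set.range fun l : List F ↦ Prod.map f f ⁻¹' wordComp (l.map Subtype.val))
        ≤ #(List F) := mk_range_le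
      _ ≤ max ℵ₀ #F := mk_list_le_max F
      _ = #F := max_eq_right hlam
  · rintro _ ⟨l, rfl⟩
    exact hexpanding _ (hF.wordComp_mem l)
  · intro E hE
    obtain ⟨l, hl⟩ := hF.exists_subset_wordComp (hcoarse E hE)
    exact ⟨_, ⟨l, rfl⟩, fun q hq ↦ hl ⟨q, hq, rfl⟩⟩

/-- If `X` coarsely embeds into `Y` (via a coarse and expanding map `f`) and the u.l.f.
coarse structure `𝓔'` on `Y` is generated by a set of infinite cardinality `λ`, then the
u.l.f. coarse structure `𝓔` on `X` is generated by a set of cardinality at most `λ`. -/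
theorem generated_le_of_coarse_embedding {X Y : Type u}
    (𝓔 : CoarseStructure X) (𝓔' : CoarseStructure Y)
    (hX : 𝓔.ULF) (hY : 𝓔'.ULF)
    (lam : Cardinal) (hlam : Cardinal.aleph0 ≤ lam)
    (f : X → Y)
    (hcoarse : ∀ E ∈ 𝓔.sets,
      {p : Y × Y | ∃ q ∈ E, p = (f q.1, f q.2)} ∈ 𝓔'.sets)
    (hexpanding : ∀ E ∈ 𝓔'.sets, {q : X × X | (f q.1, f q.2) ∈ E} ∈ 𝓔.sets)
    (hgen : ∃ F : Set (Set (Y × Y)), Cardinal.mk F = lam ∧ F ⊆ 𝓔'.sets ∧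
      ∀ 𝓖 : CoarseStructure Y, F ⊆ 𝓖.sets → 𝓔'.sets ⊆ 𝓖.sets) :
    ∃ G : Set (Set (X × X)), Cardinal.mk G ≤ lam ∧ G ⊆ 𝓔.sets ∧
      ∀ 𝓖 : CoarseStructure X, G ⊆ 𝓖.sets → 𝓔.sets ⊆ 𝓖.sets :=
  generated_le_of_coarse_embedding_general 𝓔 𝓔' lam hlam f hcoarse hexpanding hgen
end
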